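/- There exists κ > 0, depending only on c1, c2, σ0, σ1, such that for |Φ| < 2κ the genuine-nonlinearity coefficient of the first characteristic field satisfies c¹₁₁(Φ) := ∇λ1(Φ) · r1(Φ) = [2σ0(a−b)(λ1²−b) + (2σ0+6σ1)c²] / (4σ1 λ1 √Δ), and c⁴₄₄(Φ) := ∇λ4(Φ) · r4(Φ) = −c¹₁₁(Φ). In particular, at Φ = 0, c¹₁₁(0) = σ0(c1² − c2²)/(2σ1 c1), which is nonzero whenever σ0σ1 ≠ 0 (genuine nonlinearity of the first and fourth characteristic fields). -/

import Mathlib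

/-! Where `b > 0` and `Δ > 0` (an open condition, true at `Φ = 0` because `c₁ > c₂ > 0`), the
map `λ₁ = √U`, `U = ((a+b)+√Δ)/2`, is differentiable and the chain rule gives
`∇λ₁ · v = (∇U · v)/(2λ₁)`, where `∇U · v` involves only `v₀` and `v₁`. Substituting `r₁` and
using `λ₁² = U`, `(√Δ)² = Δ` yields the quotient. Since `λ₄ = -λ₁` and `r₄` agrees with `r₁` in
the first two components, `c⁴₄₄ = -c¹₁₁`. -/

noncomputable section

open Real Matrix Set

namespace ElasticIP

/-- Euclidean norm on `ℝ⁴` (presented as `Fin 4 → ℝ`). -/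
def eucNorm4 (Φ : Fin 4 → ℝ) : ℝ := Real.sqrt (∑ i, (Φ i) ^ 2)

/-- `a(Φ) = c₁² + 2σ₀φ₁`. -/
def aF (c1 σ0 : ℝ) (Φ : Fin 4 → ℝ) : ℝ := c1 ^ 2 + 2 * σ0 * Φ 0

/-- `b(Φ) = c₂² + 2σ₁φ₁`. -/
def bF (c2 σ1 : ℝ) (Φ : Fin 4 → ℝ) : ℝ := c2 ^ 2 + 2 * σ1 * Φ 0

/-- `c(Φ) = 2σ₁φ₂`. -/
def cF (σ1 : ℝ) (Φ : Fin 4 → ℝ) : ℝ := 2 * σ1 * Φ 1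

/-- `Δ = (a-b)² + 4c²`. -/
def ΔF (c1 c2 σ0 σ1 : ℝ) (Φ : Fin 4 → ℝ) : ℝ :=
  (aF c1 σ0 Φ - bF c2 σ1 Φ) ^ 2 + 4 * cF σ1 Φ ^ 2

/-- The coefficient matrix `A(Φ)` of the first-order system. -/
def AM (c1 c2 σ0 σ1 : ℝ) (Φ : Fin 4 → ℝ) : Matrix (Fin 4) (Fin 4) ℝ :=
  !![0, 0, -1, 0;
     0, 0, 0, -1;
     -aF c1 σ0 Φ, -cF σ1 Φ, 0, 0;
     -cF σ1 Φ, -bF c2 σ1 Φ, 0, 0]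

/-- `λ₁ = √(((a+b)+√Δ)/2)`. -/
def lam1 (c1 c2 σ0 σ1 : ℝ) (Φ : Fin 4 → ℝ) : ℝ :=
  Real.sqrt ((aF c1 σ0 Φ + bF c2 σ1 Φ + Real.sqrt (ΔF c1 c2 σ0 σ1 Φ)) / 2)

/-- `λ₂ = √(((a+b)-√Δ)/2)`. -/
def lam2 (c1 c2 σ0 σ1 : ℝ) (Φ : Fin 4 → ℝ) : ℝ :=
  Real.sqrt ((aF c1 σ0 Φ + bF c2 σ1 Φ - Real.sqrt (ΔF c1 c2 σ0 σ1 Φ)) / 2)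

/-- `λ₃ = -λ₂`. -/
def lam3 (c1 c2 σ0 σ1 : ℝ) (Φ : Fin 4 → ℝ) : ℝ := - lam2 c1 c2 σ0 σ1 Φ

/-- `λ₄ = -λ₁`. -/
def lam4 (c1 c2 σ0 σ1 : ℝ) (Φ : Fin 4 → ℝ) : ℝ := - lam1 c1 c2 σ0 σ1 Φ

/-- Right eigenvector `r₁`. -/
def r1 (c1 c2 σ0 σ1 : ℝ) (Φ : Fin 4 → ℝ) : Fin 4 → ℝ :=
  ![(lam1 c1 c2 σ0 σ1 Φ ^ 2 - bF c2 σ1 Φ) / (2 * σ1),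
    Φ 1,
    -(lam1 c1 c2 σ0 σ1 Φ * (lam1 c1 c2 σ0 σ1 Φ ^ 2 - bF c2 σ1 Φ)) / (2 * σ1),
    -(lam1 c1 c2 σ0 σ1 Φ) * Φ 1]

/-- Right eigenvector `r₂`. -/
def r2 (c1 c2 σ0 σ1 : ℝ) (Φ : Fin 4 → ℝ) : Fin 4 → ℝ :=
  ![(lam2 c1 c2 σ0 σ1 Φ ^ 2 - bF c2 σ1 Φ) / (2 * σ1),
    Φ 1,
    -(lam2 c1 c2 σ0 σ1 Φ * (lam2 c1 c2 σ0 σ1 Φ ^ 2 - bF c2 σ1 Φ)) / (2 * σ1),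
    -(lam2 c1 c2 σ0 σ1 Φ) * Φ 1]

/-- Right eigenvector `r₃`. -/
def r3 (c1 c2 σ0 σ1 : ℝ) (Φ : Fin 4 → ℝ) : Fin 4 → ℝ :=
  ![(lam2 c1 c2 σ0 σ1 Φ ^ 2 - bF c2 σ1 Φ) / (2 * σ1),
    Φ 1,
    lam2 c1 c2 σ0 σ1 Φ * (lam2 c1 c2 σ0 σ1 Φ ^ 2 - bF c2 σ1 Φ) / (2 * σ1),
    lam2 c1 c2 σ0 σ1 Φ * Φ 1]

/-- Right eigenvector `r₄`. -/
def r4 (c1 c2 σ0 σ1 : ℝ) (Φ : Fin 4 → ℝ) : Fin 4 → ℝ :=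
  ![(lam1 c1 c2 σ0 σ1 Φ ^ 2 - bF c2 σ1 Φ) / (2 * σ1),
    Φ 1,
    lam1 c1 c2 σ0 σ1 Φ * (lam1 c1 c2 σ0 σ1 Φ ^ 2 - bF c2 σ1 Φ) / (2 * σ1),
    lam1 c1 c2 σ0 σ1 Φ * Φ 1]

/-- `K = (Δ + (a-b)√Δ)/(4σ₁²)`. -/
def KF (c1 c2 σ0 σ1 : ℝ) (Φ : Fin 4 → ℝ) : ℝ :=
  (ΔF c1 c2 σ0 σ1 Φ + (aF c1 σ0 Φ - bF c2 σ1 Φ) * Real.sqrt (ΔF c1 c2 σ0 σ1 Φ)) / (4 * σ1 ^ 2)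

/-- `N = (Δ - (a-b)√Δ)/(4σ₁²)`. -/
def NF (c1 c2 σ0 σ1 : ℝ) (Φ : Fin 4 → ℝ) : ℝ :=
  (ΔF c1 c2 σ0 σ1 Φ - (aF c1 σ0 Φ - bF c2 σ1 Φ) * Real.sqrt (ΔF c1 c2 σ0 σ1 Φ)) / (4 * σ1 ^ 2)

/-- Left eigenvector `l₁`. -/
def l1 (c1 c2 σ0 σ1 : ℝ) (Φ : Fin 4 → ℝ) : Fin 4 → ℝ :=
  (KF c1 c2 σ0 σ1 Φ)⁻¹ •
    ![(lam1 c1 c2 σ0 σ1 Φ ^ 2 - bF c2 σ1 Φ) / (2 * σ1),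
      Φ 1,
      -((lam1 c1 c2 σ0 σ1 Φ ^ 2 - bF c2 σ1 Φ) / (2 * σ1 * lam1 c1 c2 σ0 σ1 Φ)),
      -(Φ 1 / lam1 c1 c2 σ0 σ1 Φ)]

/-- Left eigenvector `l₂`. -/
def l2 (c1 c2 σ0 σ1 : ℝ) (Φ : Fin 4 → ℝ) : Fin 4 → ℝ :=
  (NF c1 c2 σ0 σ1 Φ)⁻¹ •
    ![(lam2 c1 c2 σ0 σ1 Φ ^ 2 - bF c2 σ1 Φ) / (2 * σ1),
      Φ 1,
      -((lam2 c1 c2 σ0 σ1 Φ ^ 2 - bF c2 σ1 Φ) / (2 * σ1 * lam2 c1 c2 σ0 σ1 Φ)),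
      -(Φ 1 / lam2 c1 c2 σ0 σ1 Φ)]

/-- Left eigenvector `l₃`. -/
def l3 (c1 c2 σ0 σ1 : ℝ) (Φ : Fin 4 → ℝ) : Fin 4 → ℝ :=
  (NF c1 c2 σ0 σ1 Φ)⁻¹ •
    ![(lam2 c1 c2 σ0 σ1 Φ ^ 2 - bF c2 σ1 Φ) / (2 * σ1),
      Φ 1,
      (lam2 c1 c2 σ0 σ1 Φ ^ 2 - bF c2 σ1 Φ) / (2 * σ1 * lam2 c1 c2 σ0 σ1 Φ),
      Φ 1 / lam2 c1 c2 σ0 σ1 Φ]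

/-- Left eigenvector `l₄`. -/
def l4 (c1 c2 σ0 σ1 : ℝ) (Φ : Fin 4 → ℝ) : Fin 4 → ℝ :=
  (KF c1 c2 σ0 σ1 Φ)⁻¹ •
    ![(lam1 c1 c2 σ0 σ1 Φ ^ 2 - bF c2 σ1 Φ) / (2 * σ1),
      Φ 1,
      (lam1 c1 c2 σ0 σ1 Φ ^ 2 - bF c2 σ1 Φ) / (2 * σ1 * lam1 c1 c2 σ0 σ1 Φ),
      Φ 1 / lam1 c1 c2 σ0 σ1 Φ]

/-- Indexed eigenvalues `λᵢ`, `i = 1,…,4` realised as `i : Fin 4`. -/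
def lamI (c1 c2 σ0 σ1 : ℝ) (i : Fin 4) (Φ : Fin 4 → ℝ) : ℝ :=
  match i with
  | 0 => lam1 c1 c2 σ0 σ1 Φ
  | 1 => lam2 c1 c2 σ0 σ1 Φ
  | 2 => lam3 c1 c2 σ0 σ1 Φ
  | 3 => lam4 c1 c2 σ0 σ1 Φ

/-- Indexed right eigenvectors `rᵢ`. -/
def rI (c1 c2 σ0 σ1 : ℝ) (i : Fin 4) (Φ : Fin 4 → ℝ) : Fin 4 → ℝ :=
  match i with
  | 0 => r1 c1 c2 σ0 σ1 Φ
  | 1 => r2 c1 c2 σ0 σ1 Φ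
  | 2 => r3 c1 c2 σ0 σ1 Φ
  | 3 => r4 c1 c2 σ0 σ1 Φ

/-- Indexed left eigenvectors `lᵢ`. -/
def lI (c1 c2 σ0 σ1 : ℝ) (i : Fin 4) (Φ : Fin 4 → ℝ) : Fin 4 → ℝ :=
  match i with
  | 0 => l1 c1 c2 σ0 σ1 Φ
  | 1 => l2 c1 c2 σ0 σ1 Φ
  | 2 => l3 c1 c2 σ0 σ1 Φ
  | 3 => l4 c1 c2 σ0 σ1 Φ

/-- Jacobian matrix of a map `ℝ⁴ → ℝ⁴`. -/
def jac (f : (Fin 4 → ℝ) → (Fin 4 → ℝ)) (Φ : Fin 4 → ℝ) : Matrix (Fin 4) (Fin 4) ℝ :=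
  fun i j => fderiv ℝ (fun Ψ => f Ψ i) Φ (Pi.single j 1)

/-- `cⁱᵢₘ(Φ) = ∇λᵢ(Φ) · rₘ(Φ)`. -/
def cCo (c1 c2 σ0 σ1 : ℝ) (i m : Fin 4) (Φ : Fin 4 → ℝ) : ℝ :=
  fderiv ℝ (lamI c1 c2 σ0 σ1 i) Φ (rI c1 c2 σ0 σ1 m Φ)

/-- `γⁱᵢₘ(Φ) = -(λᵢ-λₘ) lᵢ · (Drᵢ rₘ - Drₘ rᵢ)`. -/
def gammaII (c1 c2 σ0 σ1 : ℝ) (i m : Fin 4) (Φ : Fin 4 → ℝ) : ℝ :=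
  -(lamI c1 c2 σ0 σ1 i Φ - lamI c1 c2 σ0 σ1 m Φ) *
    (lI c1 c2 σ0 σ1 i Φ ⬝ᵥ
      (jac (rI c1 c2 σ0 σ1 i) Φ *ᵥ rI c1 c2 σ0 σ1 m Φ -
        jac (rI c1 c2 σ0 σ1 m) Φ *ᵥ rI c1 c2 σ0 σ1 i Φ))

/-- `γⁱₖₘ(Φ) = -(λₖ-λₘ) lᵢ · (Drₖ rₘ)`. -/
def gammaKM (c1 c2 σ0 σ1 : ℝ) (i k m : Fin 4) (Φ : Fin 4 → ℝ) : ℝ :=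
  -(lamI c1 c2 σ0 σ1 k Φ - lamI c1 c2 σ0 σ1 m Φ) *
    (lI c1 c2 σ0 σ1 i Φ ⬝ᵥ (jac (rI c1 c2 σ0 σ1 k) Φ *ᵥ rI c1 c2 σ0 σ1 m Φ))

lemma abs_apply_le_eucNorm4 (Φ : Fin 4 → ℝ) (i : Fin 4) : |Φ i| ≤ eucNorm4 Φ := by
  rw [← Real.sqrt_sq_eq_abs]
  exact Real.sqrt_le_sqrt (Finset.single_le_sum (f := fun j => Φ j ^ 2)
    (fun j _ => sq_nonneg _) (Finset.mem_univ i))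

lemma norm_le_eucNorm4 (Φ : Fin 4 → ℝ) : ‖Φ‖ ≤ eucNorm4 Φ :=
  (pi_norm_le_iff_of_nonneg (Real.sqrt_nonneg _)).2 fun i =>
    (Real.norm_eq_abs _).trans_le (abs_apply_le_eucNorm4 Φ i)

@[simp] lemma aF_zero (c1 σ0 : ℝ) : aF c1 σ0 0 = c1 ^ 2 := by simp [aF]

@[simp] lemma bF_zero (c2 σ1 : ℝ) : bF c2 σ1 0 = c2 ^ 2 := by simp [bF]

@[simp] lemma cF_zero (σ1 : ℝ) : cF σ1 0 = 0 := by simp [cF]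

lemma ΔF_zero (c1 c2 σ0 σ1 : ℝ) : ΔF c1 c2 σ0 σ1 0 = (c1 ^ 2 - c2 ^ 2) ^ 2 := by simp [ΔF]

lemma abs_aF_sub_bF_le_sqrt_ΔF (c1 c2 σ0 σ1 : ℝ) (Φ : Fin 4 → ℝ) :
    |aF c1 σ0 Φ - bF c2 σ1 Φ| ≤ √(ΔF c1 c2 σ0 σ1 Φ) :=
  Real.abs_le_sqrt (by unfold ΔF; nlinarith [sq_nonneg (cF σ1 Φ)])

section FirstEigenvalue

variable {c1 c2 σ0 σ1 : ℝ} {Φ : Fin 4 → ℝ}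

lemma lam1_radicand_pos (hb : 0 < bF c2 σ1 Φ) :
    0 < (aF c1 σ0 Φ + bF c2 σ1 Φ + √(ΔF c1 c2 σ0 σ1 Φ)) / 2 := by
  linarith [neg_abs_le (aF c1 σ0 Φ - bF c2 σ1 Φ), abs_aF_sub_bF_le_sqrt_ΔF c1 c2 σ0 σ1 Φ]

lemma lam1_pos (hb : 0 < bF c2 σ1 Φ) : 0 < lam1 c1 c2 σ0 σ1 Φ :=
  Real.sqrt_pos.2 (lam1_radicand_pos hb)

lemma lam1_sq (hb : 0 < bF c2 σ1 Φ) :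
    lam1 c1 c2 σ0 σ1 Φ ^ 2 = (aF c1 σ0 Φ + bF c2 σ1 Φ + √(ΔF c1 c2 σ0 σ1 Φ)) / 2 :=
  Real.sq_sqrt (lam1_radicand_pos hb).le

lemma fderiv_lam1_apply (hb : 0 < bF c2 σ1 Φ) (hΔ : 0 < ΔF c1 c2 σ0 σ1 Φ) (v : Fin 4 → ℝ) :
    fderiv ℝ (lam1 c1 c2 σ0 σ1) Φ v =
      ((σ0 + σ1) * v 0 + ((aF c1 σ0 Φ - bF c2 σ1 Φ) * (σ0 - σ1) * v 0 +
          4 * σ1 * cF σ1 Φ * v 1) / √(ΔF c1 c2 σ0 σ1 Φ)) / (2 * lam1 c1 c2 σ0 σ1 Φ) := by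
  have ha : HasFDerivAt (aF c1 σ0) _ Φ :=
    ((hasFDerivAt_apply (𝕜 := ℝ) (0 : Fin 4) Φ).const_mul _).const_add _
  have hb' : HasFDerivAt (bF c2 σ1) _ Φ :=
    ((hasFDerivAt_apply (𝕜 := ℝ) (0 : Fin 4) Φ).const_mul _).const_add _
  have hc : HasFDerivAt (cF σ1) _ Φ :=
    (hasFDerivAt_apply (𝕜 := ℝ) (1 : Fin 4) Φ).const_mul _
  have hΔ' : HasFDerivAt (ΔF c1 c2 σ0 σ1) _ Φ :=
    ((ha.fun_sub hb').pow 2).fun_add ((hc.pow 2).const_mul 4)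
  have hlam : HasFDerivAt (lam1 c1 c2 σ0 σ1) _ Φ :=
    (((ha.fun_add hb').fun_add (hΔ'.sqrt hΔ.ne')).mul_const 2⁻¹).sqrt
      (by simpa only [div_eq_mul_inv] using (lam1_radicand_pos hb).ne')
  have hS : √(ΔF c1 c2 σ0 σ1 Φ) ≠ 0 := (Real.sqrt_pos.2 hΔ).ne'
  have hL : lam1 c1 c2 σ0 σ1 Φ ≠ 0 := (lam1_pos hb).ne'
  have hfold : √((aF c1 σ0 Φ + bF c2 σ1 Φ + √(ΔF c1 c2 σ0 σ1 Φ)) / 2) = lam1 c1 c2 σ0 σ1 Φ :=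
    rfl
  rw [hlam.fderiv]
  simp only [_root_.smul_apply, _root_.add_apply, _root_.sub_apply,
    ContinuousLinearMap.proj_apply, smul_eq_mul, nsmul_eq_mul, ← div_eq_mul_inv, hfold]
  field_simp
  ring

lemma fderiv_lam1_r1 (hσ1 : σ1 ≠ 0) (hb : 0 < bF c2 σ1 Φ) (hΔ : 0 < ΔF c1 c2 σ0 σ1 Φ) :
    fderiv ℝ (lam1 c1 c2 σ0 σ1) Φ (r1 c1 c2 σ0 σ1 Φ) =
      (2 * σ0 * (aF c1 σ0 Φ - bF c2 σ1 Φ) * (lam1 c1 c2 σ0 σ1 Φ ^ 2 - bF c2 σ1 Φ) +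
          (2 * σ0 + 6 * σ1) * cF σ1 Φ ^ 2) /
        (4 * σ1 * lam1 c1 c2 σ0 σ1 Φ * √(ΔF c1 c2 σ0 σ1 Φ)) := by
  have hS2 : √(ΔF c1 c2 σ0 σ1 Φ) ^ 2 =
      (aF c1 σ0 Φ - bF c2 σ1 Φ) ^ 2 + 4 * (2 * σ1 * Φ 1) ^ 2 := Real.sq_sqrt hΔ.le
  have hS : √(ΔF c1 c2 σ0 σ1 Φ) ≠ 0 := (Real.sqrt_pos.2 hΔ).ne'
  have hL : lam1 c1 c2 σ0 σ1 Φ ≠ 0 := (lam1_pos hb).ne'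
  rw [fderiv_lam1_apply hb hΔ]
  simp only [r1, Matrix.cons_val_zero, Matrix.cons_val_one, cF]
  rw [lam1_sq hb]
  generalize √(ΔF c1 c2 σ0 σ1 Φ) = S at *
  field_simp
  linear_combination (4 * (σ0 + σ1)) * hS2

lemma fderiv_lam4_r4 (hb : 0 < bF c2 σ1 Φ) (hΔ : 0 < ΔF c1 c2 σ0 σ1 Φ) :
    fderiv ℝ (lam4 c1 c2 σ0 σ1) Φ (r4 c1 c2 σ0 σ1 Φ) =
      -fderiv ℝ (lam1 c1 c2 σ0 σ1) Φ (r1 c1 c2 σ0 σ1 Φ) := by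
  rw [show lam4 c1 c2 σ0 σ1 = fun Ψ => -lam1 c1 c2 σ0 σ1 Ψ from rfl, fderiv_fun_neg,
    _root_.neg_apply, fderiv_lam1_apply hb hΔ, fderiv_lam1_apply hb hΔ]
  simp only [r1, r4, Matrix.cons_val_zero, Matrix.cons_val_one]

end FirstEigenvalue

lemma exists_pos_forall_eucNorm4_lt_bF_pos_and_ΔF_pos {c1 c2 σ0 σ1 : ℝ} (hc2 : 0 < c2)
    (hc12 : c2 < c1) : ∃ κ > (0 : ℝ), ∀ Φ : Fin 4 → ℝ, eucNorm4 Φ < 2 * κ →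
      0 < bF c2 σ1 Φ ∧ 0 < ΔF c1 c2 σ0 σ1 Φ := by
  have hopen : IsOpen {Φ : Fin 4 → ℝ | 0 < bF c2 σ1 Φ ∧ 0 < ΔF c1 c2 σ0 σ1 Φ} :=
    (isOpen_lt continuous_const (by unfold bF; fun_prop : Continuous (bF c2 σ1))).inter
      (isOpen_lt continuous_const (by unfold ΔF aF bF cF; fun_prop : Continuous (ΔF c1 c2 σ0 σ1)))
  have hgap : 0 < c1 ^ 2 - c2 ^ 2 := sub_pos.2 (pow_lt_pow_left₀ hc12 hc2.le two_ne_zero)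
  obtain ⟨ε, hε, hball⟩ := Metric.isOpen_iff.1 hopen 0
    ⟨by rw [bF_zero]; positivity, by rw [ΔF_zero]; positivity⟩
  refine ⟨ε / 2, half_pos hε, fun Φ hΦ => hball ?_⟩
  rw [mem_ball_zero_iff]
  linarith [norm_le_eucNorm4 Φ]

lemma fderiv_lam1_r1_zero {c1 c2 σ0 σ1 : ℝ} (hc2 : 0 < c2) (hc12 : c2 < c1) (hσ1 : σ1 ≠ 0) :
    fderiv ℝ (lam1 c1 c2 σ0 σ1) 0 (r1 c1 c2 σ0 σ1 0) = σ0 * (c1 ^ 2 - c2 ^ 2) / (2 * σ1 * c1) := by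
  have hc1 : 0 < c1 := hc2.trans hc12
  have hgap : 0 < c1 ^ 2 - c2 ^ 2 := sub_pos.2 (pow_lt_pow_left₀ hc12 hc2.le two_ne_zero)
  have hsqrt : √(ΔF c1 c2 σ0 σ1 0) = c1 ^ 2 - c2 ^ 2 := by
    rw [ΔF_zero, Real.sqrt_sq hgap.le]
  have hlam : lam1 c1 c2 σ0 σ1 0 = c1 := by
    rw [lam1, hsqrt, aF_zero, bF_zero, show (c1 ^ 2 + c2 ^ 2 + (c1 ^ 2 - c2 ^ 2)) / 2 = c1 ^ 2 by
      ring, Real.sqrt_sq hc1.le]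
  rw [fderiv_lam1_r1 hσ1 (by rw [bF_zero]; positivity) (by rw [ΔF_zero]; positivity),
    hsqrt, hlam, aF_zero, bF_zero, cF_zero]
  field_simp
  ring

/-- The genuine-nonlinearity coefficient of the first field:
for `|Φ| < 2κ`, `c¹₁₁(Φ) = ∇λ₁ · r₁ = (2σ₀(a-b)(λ₁²-b) + (2σ₀+6σ₁)c²)/(4σ₁λ₁√Δ)` and
`c⁴₄₄(Φ) = ∇λ₄ · r₄ = -c¹₁₁(Φ)`; at `Φ = 0`, `c¹₁₁(0) = σ₀(c₁²-c₂²)/(2σ₁c₁) ≠ 0`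
whenever `σ₀σ₁ ≠ 0`. -/
theorem genuine_nonlinearity_first_field (c1 c2 σ0 σ1 : ℝ)
    (hc2 : 0 < c2) (hc12 : c2 < c1) (hσ1 : σ1 ≠ 0) :
    ∃ κ > (0:ℝ),
      (∀ Φ : Fin 4 → ℝ, eucNorm4 Φ < 2 * κ →
        fderiv ℝ (lam1 c1 c2 σ0 σ1) Φ (r1 c1 c2 σ0 σ1 Φ) =
          (2 * σ0 * (aF c1 σ0 Φ - bF c2 σ1 Φ) * (lam1 c1 c2 σ0 σ1 Φ ^ 2 - bF c2 σ1 Φ) +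
              (2 * σ0 + 6 * σ1) * cF σ1 Φ ^ 2) /
            (4 * σ1 * lam1 c1 c2 σ0 σ1 Φ * Real.sqrt (ΔF c1 c2 σ0 σ1 Φ)) ∧
        fderiv ℝ (lam4 c1 c2 σ0 σ1) Φ (r4 c1 c2 σ0 σ1 Φ) =
          -(fderiv ℝ (lam1 c1 c2 σ0 σ1) Φ (r1 c1 c2 σ0 σ1 Φ))) ∧
      fderiv ℝ (lam1 c1 c2 σ0 σ1) 0 (r1 c1 c2 σ0 σ1 0) =
        σ0 * (c1 ^ 2 - c2 ^ 2) / (2 * σ1 * c1) ∧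
      (σ0 * σ1 ≠ 0 → fderiv ℝ (lam1 c1 c2 σ0 σ1) 0 (r1 c1 c2 σ0 σ1 0) ≠ 0) := by
  obtain ⟨κ, hκ, hregular⟩ :=
    exists_pos_forall_eucNorm4_lt_bF_pos_and_ΔF_pos (σ0 := σ0) (σ1 := σ1) hc2 hc12
  have hzero := fderiv_lam1_r1_zero (σ0 := σ0) hc2 hc12 hσ1
  refine ⟨κ, hκ, fun Φ hΦ => ?_, hzero, fun hσ => ?_⟩
  · obtain ⟨hb, hΔ⟩ := hregular Φ hΦ
    exact ⟨fderiv_lam1_r1 hσ1 hb hΔ, fderiv_lam4_r4 hb hΔ⟩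
  · have hc1 : 0 < c1 := hc2.trans hc12
    have hgap : 0 < c1 ^ 2 - c2 ^ 2 := sub_pos.2 (pow_lt_pow_left₀ hc12 hc2.le two_ne_zero)
    rw [hzero]
    exact div_ne_zero (mul_ne_zero (left_ne_zero_of_mul hσ) hgap.ne')
      (mul_ne_zero (mul_ne_zero two_ne_zero hσ1) hc1.ne')

end ElasticIP
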